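/- Let (P, x_L, x_R) and (Q, y_L, y_R) be finite oriented posets with weight functions into a commutative ring R. Then the up weight matrix of the glued oriented poset P↗Q (with left vertex x_L and right vertex y_R) satisfies M_w((P↗Q)↗) = M_w(P↗) · M_w(Q↗), where the right-hand side is the product of 2×2 matrices over R. -/
import Mathlib


open Classical Relation

noncomputable section

variable {R : Type*} [CommRing R]

/-- A finite set `I` is a lower set (order ideal) for the relation `r`. -/
def IsLowerSetRel {α : Type*} (r : α → α → Prop) (I : Finset α) : Prop :=
  ∀ x ∈ I, ∀ y, r y x → y ∈ I

/-- The sum of the weights `∏ i ∈ I, w i` over all lower sets `I` of the relation `r`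
satisfying the condition `C`.  Taking `C = fun _ => True` gives the weight polynomial. -/
def wSum {α : Type*} [Fintype α] (r : α → α → Prop) (w : α → R) (C : Finset α → Prop) : R :=
  ∑ I ∈ Finset.univ.filter (fun I : Finset α => IsLowerSetRel r I ∧ C I), ∏ i ∈ I, w i

/-- The down weight matrix `M_w(P↘)` of an oriented poset `(P, xL, xR)`. -/
def downMat {α : Type*} [Fintype α] (r : α → α → Prop) (w : α → R) (xL xR : α) :
    Matrix (Fin 2) (Fin 2) R :=
  !![wSum r w (fun _ => True), -wSum r w (fun I => xR ∈ I);
     wSum r w (fun I => xL ∉ I), -wSum r w (fun I => xR ∈ I ∧ xL ∉ I)]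

/-- The up weight matrix `M_w(P↗)` of an oriented poset `(P, xL, xR)`. -/
def upMat {α : Type*} [Fintype α] (r : α → α → Prop) (w : α → R) (xL xR : α) :
    Matrix (Fin 2) (Fin 2) R :=
  !![wSum r w (fun I => xR ∈ I), wSum r w (fun I => xR ∉ I);
     wSum r w (fun I => xR ∈ I ∧ xL ∉ I), wSum r w (fun I => xR ∉ I ∧ xL ∉ I)]

/-- The order relation of the glued poset `P↘Q` on the disjoint union `P ⊔ Q`:
elements of `P` (resp. `Q`) compare as in `P` (resp. `Q`), an element `a ∈ Q` lies below
`b ∈ P` iff `a ≤ yL` in `Q` and `xR ≤ b` in `P`, and no element of `P` lies below an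
element of `Q`. -/
def glueDown {α β : Type*} (rP : α → α → Prop) (rQ : β → β → Prop) (xR : α) (yL : β) :
    α ⊕ β → α ⊕ β → Prop
  | .inl a, .inl b => rP a b
  | .inr a, .inr b => rQ a b
  | .inr a, .inl b => rQ a yL ∧ rP xR b
  | .inl _, .inr _ => False

/-- The order relation of the glued poset `P↗Q` on the disjoint union `P ⊔ Q`:
elements of `P` (resp. `Q`) compare as in `P` (resp. `Q`), an element `a ∈ P` lies below
`b ∈ Q` iff `a ≤ xR` in `P` and `yL ≤ b` in `Q`, and no element of `Q` lies below an
element of `P`. -/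
def glueUp {α β : Type*} (rP : α → α → Prop) (rQ : β → β → Prop) (xR : α) (yL : β) :
    α ⊕ β → α ⊕ β → Prop
  | .inl a, .inl b => rP a b
  | .inr a, .inr b => rQ a b
  | .inl a, .inr b => rP a xR ∧ rQ yL b
  | .inr _, .inl _ => False
section Aux

variable {α β : Type*} [Fintype α] [Fintype β] [PartialOrder α] [PartialOrder β]

lemma prod_disjSum' (s : Finset α) (t : Finset β) (f : α ⊕ β → R) :
    ∏ x ∈ s.disjSum t, f x = (∏ a ∈ s, f (Sum.inl a)) * (∏ b ∈ t, f (Sum.inr b)) := by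
  rw [← Finset.map_inl_disjUnion_map_inr, Finset.prod_disjUnion, Finset.prod_map,
    Finset.prod_map]
  rfl

lemma isLower_glue_iff (xR : α) (yL : β) (I : Finset (α ⊕ β)) :
    IsLowerSetRel (glueUp (· ≤ · : α → α → Prop) (· ≤ · : β → β → Prop) xR yL) I ↔
      IsLowerSetRel (· ≤ · : α → α → Prop) I.toLeft ∧
        IsLowerSetRel (· ≤ · : β → β → Prop) I.toRight ∧
        (yL ∈ I.toRight → xR ∈ I.toLeft) := by
  constructor
  · intro h
    refine ⟨?_, ?_, ?_⟩
    · intro x hx y hyx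
      simp only [Finset.mem_toLeft] at *
      exact h _ hx _ hyx
    · intro x hx y hyx
      simp only [Finset.mem_toRight] at *
      exact h _ hx _ hyx
    · intro hy
      simp only [Finset.mem_toLeft, Finset.mem_toRight] at *
      exact h _ hy _ ⟨le_refl xR, le_refl yL⟩
  · rintro ⟨hL, hR, hc⟩ x hx y hyx
    match x, y with
    | .inl b, .inl a =>
      exact Finset.mem_toLeft.1 (hL b (Finset.mem_toLeft.2 hx) a hyx)
    | .inr b, .inr a =>
      exact Finset.mem_toRight.1 (hR b (Finset.mem_toRight.2 hx) a hyx)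
    | .inr b, .inl a =>
      obtain ⟨h1, h2⟩ := hyx
      have hyLb : yL ∈ I.toRight := hR b (Finset.mem_toRight.2 hx) yL h2
      exact Finset.mem_toLeft.1 (hL xR (hc hyLb) a h1)
    | .inl b, .inr a => exact absurd hyx not_false

lemma sum_filter_split {γ δ : Type*} [Fintype γ] [Fintype δ]
    (PA : Finset γ → Prop) (PB : Finset δ → Prop)
    (f : Finset γ → R) (g : Finset δ → R) :
    ∑ p ∈ (Finset.univ : Finset (Finset γ × Finset δ)).filter (fun p => PA p.1 ∧ PB p.2),
        f p.1 * g p.2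
      = (∑ A ∈ Finset.univ.filter PA, f A) * (∑ B ∈ Finset.univ.filter PB, g B) := by
  classical
  rw [Finset.sum_mul_sum, ← Finset.univ_product_univ, Finset.filter_product,
    Finset.sum_product]

lemma wSum_glue (wP : α → R) (wQ : β → R) (xR : α) (yL : β)
    (CP : Finset α → Prop) (CQ : Finset β → Prop) :
    wSum (glueUp (· ≤ · : α → α → Prop) (· ≤ · : β → β → Prop) xR yL) (Sum.elim wP wQ)
        (fun I => CP I.toLeft ∧ CQ I.toRight)
      = wSum (· ≤ ·) wP (fun A => CP A ∧ xR ∈ A) * wSum (· ≤ ·) wQ CQ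
        + wSum (· ≤ ·) wP (fun A => CP A ∧ xR ∉ A)
            * wSum (· ≤ ·) wQ (fun B => CQ B ∧ yL ∉ B) := by
  classical
  have step1 :
      wSum (glueUp (· ≤ · : α → α → Prop) (· ≤ · : β → β → Prop) xR yL) (Sum.elim wP wQ)
          (fun I => CP I.toLeft ∧ CQ I.toRight)
      = ∑ p ∈ (Finset.univ : Finset (Finset α × Finset β)).filter (fun p =>
          (IsLowerSetRel (· ≤ ·) p.1 ∧ CP p.1) ∧ (IsLowerSetRel (· ≤ ·) p.2 ∧ CQ p.2) ∧
            (yL ∈ p.2 → xR ∈ p.1)),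
          (∏ a ∈ p.1, wP a) * (∏ b ∈ p.2, wQ b) := by
    unfold wSum
    refine Finset.sum_nbij' (fun I => (I.toLeft, I.toRight)) (fun p => p.1.disjSum p.2)
      ?_ ?_ ?_ ?_ ?_
    · intro I hI
      simp only [Finset.mem_filter, Finset.mem_univ, true_and] at hI ⊢
      rw [isLower_glue_iff] at hI
      tauto
    · intro p hp
      simp only [Finset.mem_filter, Finset.mem_univ, true_and] at hp ⊢
      rw [isLower_glue_iff]
      simp only [Finset.toLeft_disjSum, Finset.toRight_disjSum]
      tauto
    · intro I _
      exact Finset.toLeft_disjSum_toRight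
    · intro p _
      simp
    · intro I _
      rw [← Finset.toLeft_disjSum_toRight (u := I), prod_disjSum']
      simp [Finset.toLeft_disjSum_toRight]
  rw [step1]
  unfold wSum
  rw [← Finset.sum_filter_add_sum_filter_not _ (fun p => xR ∈ p.1)]
  congr 1
  · rw [Finset.filter_filter]
    have hcongr : Finset.filter (fun p : Finset α × Finset β =>
        ((IsLowerSetRel (· ≤ ·) p.1 ∧ CP p.1) ∧ (IsLowerSetRel (· ≤ ·) p.2 ∧ CQ p.2) ∧
          (yL ∈ p.2 → xR ∈ p.1)) ∧ xR ∈ p.1) Finset.univ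
        = Finset.filter (fun p : Finset α × Finset β =>
            (IsLowerSetRel (· ≤ ·) p.1 ∧ CP p.1 ∧ xR ∈ p.1) ∧
              (IsLowerSetRel (· ≤ ·) p.2 ∧ CQ p.2)) Finset.univ := by
      apply Finset.filter_congr
      intro p _
      constructor <;> (intro h; tauto)
    rw [hcongr]
    have h2 := sum_filter_split (R := R)
      (fun A : Finset α => IsLowerSetRel (· ≤ ·) A ∧ CP A ∧ xR ∈ A)
      (fun B : Finset β => IsLowerSetRel (· ≤ ·) B ∧ CQ B)
      (fun A => ∏ a ∈ A, wP a) (fun B => ∏ b ∈ B, wQ b)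
    beta_reduce at h2 ⊢
    convert h2 using 3 <;> congr!
  · rw [Finset.filter_filter]
    have hcongr : Finset.filter (fun p : Finset α × Finset β =>
        ((IsLowerSetRel (· ≤ ·) p.1 ∧ CP p.1) ∧ (IsLowerSetRel (· ≤ ·) p.2 ∧ CQ p.2) ∧
          (yL ∈ p.2 → xR ∈ p.1)) ∧ ¬ xR ∈ p.1) Finset.univ
        = Finset.filter (fun p : Finset α × Finset β =>
            (IsLowerSetRel (· ≤ ·) p.1 ∧ CP p.1 ∧ xR ∉ p.1) ∧
              (IsLowerSetRel (· ≤ ·) p.2 ∧ CQ p.2 ∧ yL ∉ p.2)) Finset.univ := by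
      apply Finset.filter_congr
      intro p _
      constructor <;> (intro h; tauto)
    rw [hcongr]
    have h2 := sum_filter_split (R := R)
      (fun A : Finset α => IsLowerSetRel (· ≤ ·) A ∧ CP A ∧ xR ∉ A)
      (fun B : Finset β => IsLowerSetRel (· ≤ ·) B ∧ CQ B ∧ yL ∉ B)
      (fun A => ∏ a ∈ A, wP a) (fun B => ∏ b ∈ B, wQ b)
    beta_reduce at h2 ⊢
    convert h2 using 3 <;> congr!

lemma wSum_congr {γ : Type*} [Fintype γ] (r : γ → γ → Prop) (w : γ → R)
    (C C' : Finset γ → Prop) (h : ∀ I, C I ↔ C' I) : wSum r w C = wSum r w C' := by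
  unfold wSum
  congr 1
  apply Finset.filter_congr
  intro I _
  rw [h I]

end Aux

/-- `M_w((P↗Q)↗) = M_w(P↗) · M_w(Q↗)`. -/
theorem upMat_glueUp {α β : Type*} [Fintype α] [Fintype β]
    [PartialOrder α] [PartialOrder β] (wP : α → R) (wQ : β → R)
    (xL xR : α) (yL yR : β) :
    upMat (glueUp (· ≤ · : α → α → Prop) (· ≤ · : β → β → Prop) xR yL)
        (Sum.elim wP wQ) (Sum.inl xL) (Sum.inr yR) =
      upMat (· ≤ ·) wP xL xR * upMat (· ≤ ·) wQ yL yR := by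
  classical
  set g := glueUp (· ≤ · : α → α → Prop) (· ≤ · : β → β → Prop) xR yL with hg
  set w := Sum.elim wP wQ with hw
  have key : ∀ CP : Finset α → Prop, ∀ CQ : Finset β → Prop,
      wSum g w (fun I => CP I.toLeft ∧ CQ I.toRight)
        = wSum (· ≤ ·) wP (fun A => CP A ∧ xR ∈ A) * wSum (· ≤ ·) wQ CQ
          + wSum (· ≤ ·) wP (fun A => CP A ∧ xR ∉ A)
              * wSum (· ≤ ·) wQ (fun B => CQ B ∧ yL ∉ B) :=
    fun CP CQ => wSum_glue wP wQ xR yL CP CQ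
  have e00 : wSum g w (fun I => Sum.inr yR ∈ I)
      = wSum (· ≤ ·) wP (fun A => xR ∈ A) * wSum (· ≤ ·) wQ (fun B => yR ∈ B)
        + wSum (· ≤ ·) wP (fun A => xR ∉ A)
            * wSum (· ≤ ·) wQ (fun B => yR ∈ B ∧ yL ∉ B) := by
    rw [wSum_congr g w _ (fun I => (fun _ : Finset α => True) I.toLeft ∧
        (fun B => yR ∈ B) I.toRight) (by simp), key (fun _ => True) (fun B => yR ∈ B)]
    rw [wSum_congr (· ≤ ·) wP (fun A => (fun _ : Finset α => True) A ∧ xR ∈ A)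
        (fun A => xR ∈ A) (by tauto),
      wSum_congr (· ≤ ·) wP (fun A => (fun _ : Finset α => True) A ∧ xR ∉ A)
        (fun A => xR ∉ A) (by tauto)]
  have e01 : wSum g w (fun I => Sum.inr yR ∉ I)
      = wSum (· ≤ ·) wP (fun A => xR ∈ A) * wSum (· ≤ ·) wQ (fun B => yR ∉ B)
        + wSum (· ≤ ·) wP (fun A => xR ∉ A)
            * wSum (· ≤ ·) wQ (fun B => yR ∉ B ∧ yL ∉ B) := by
    rw [wSum_congr g w _ (fun I => (fun _ : Finset α => True) I.toLeft ∧
        (fun B => yR ∉ B) I.toRight) (by simp), key (fun _ => True) (fun B => yR ∉ B)]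
    rw [wSum_congr (· ≤ ·) wP (fun A => (fun _ : Finset α => True) A ∧ xR ∈ A)
        (fun A => xR ∈ A) (by tauto),
      wSum_congr (· ≤ ·) wP (fun A => (fun _ : Finset α => True) A ∧ xR ∉ A)
        (fun A => xR ∉ A) (by tauto)]
  have e10 : wSum g w (fun I => Sum.inr yR ∈ I ∧ Sum.inl xL ∉ I)
      = wSum (· ≤ ·) wP (fun A => xR ∈ A ∧ xL ∉ A) * wSum (· ≤ ·) wQ (fun B => yR ∈ B)
        + wSum (· ≤ ·) wP (fun A => xR ∉ A ∧ xL ∉ A)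
            * wSum (· ≤ ·) wQ (fun B => yR ∈ B ∧ yL ∉ B) := by
    rw [wSum_congr g w _ (fun I => (fun A => xL ∉ A) I.toLeft ∧
        (fun B => yR ∈ B) I.toRight) (by simp; tauto), key (fun A => xL ∉ A) (fun B => yR ∈ B)]
    rw [wSum_congr (· ≤ ·) wP (fun A => xL ∉ A ∧ xR ∈ A)
        (fun A => xR ∈ A ∧ xL ∉ A) (by tauto),
      wSum_congr (· ≤ ·) wP (fun A => xL ∉ A ∧ xR ∉ A)
        (fun A => xR ∉ A ∧ xL ∉ A) (by tauto)]
  have e11 : wSum g w (fun I => Sum.inr yR ∉ I ∧ Sum.inl xL ∉ I)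
      = wSum (· ≤ ·) wP (fun A => xR ∈ A ∧ xL ∉ A) * wSum (· ≤ ·) wQ (fun B => yR ∉ B)
        + wSum (· ≤ ·) wP (fun A => xR ∉ A ∧ xL ∉ A)
            * wSum (· ≤ ·) wQ (fun B => yR ∉ B ∧ yL ∉ B) := by
    rw [wSum_congr g w _ (fun I => (fun A => xL ∉ A) I.toLeft ∧
        (fun B => yR ∉ B) I.toRight) (by simp; tauto), key (fun A => xL ∉ A) (fun B => yR ∉ B)]
    rw [wSum_congr (· ≤ ·) wP (fun A => xL ∉ A ∧ xR ∈ A)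
        (fun A => xR ∈ A ∧ xL ∉ A) (by tauto),
      wSum_congr (· ≤ ·) wP (fun A => xL ∉ A ∧ xR ∉ A)
        (fun A => xR ∉ A ∧ xL ∉ A) (by tauto)]
  ext i j
  fin_cases i <;> fin_cases j <;>
    simp [upMat, Matrix.mul_apply, Fin.sum_univ_two, e00, e01, e10, e11]
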